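/- Let n ≥ 3, β₁, β₂ > 0, and r = (β₁ / (4 β₂ sin(π/n)(1 − cos(2π/n))))^{1/4}. Place x_j = r(cos(2(j−1)π/n), sin(2(j−1)π/n)) for j = 1,…,n, with neighbors N_j = {j−1, j+1} (indices mod n, the two nearest points). Then for each j, β₁ x_j/‖x_j‖³ + β₂ Σ_{k ∈ N_j} ‖x_j − x_k‖ (x_k − x_j) = 0. That is, the evenly spaced configuration with nearest-neighbor ring graph balances inverse-square repulsion from the origin against distance-weighted attraction to ring neighbors. -/

import Mathlib

open Real

noncomputable section

/-- A point in the Euclidean plane from two coordinates. -/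
def pt (a b : ℝ) : EuclideanSpace ℝ (Fin 2) :=
  (WithLp.equiv 2 (Fin 2 → ℝ)).symm ![a, b]

/-- The `j`-th vertex (0-indexed, extended periodically to `ℕ`) of a regular `n`-gon of
radius `r` centered at the origin. -/
def vtx (n : ℕ) (r : ℝ) (j : ℕ) : EuclideanSpace ℝ (Fin 2) :=
  pt (r * cos (2 * π * j / n)) (r * sin (2 * π * j / n))

lemma norm_pt (a b : ℝ) : ‖pt a b‖ = Real.sqrt (a^2 + b^2) := by
  rw [EuclideanSpace.norm_eq]
  simp [pt, Fin.sum_univ_two, sq_abs]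

lemma pt_sub (a b c d : ℝ) : pt a b - pt c d = pt (a-c) (b-d) := by
  ext i; fin_cases i <;> rfl

/-- For `n ≥ 3`, `β₁, β₂ > 0` and radius `r = (β₁/(4β₂ sin(π/n)(1 − cos(2π/n))))^{1/4}`,
the evenly spaced `n`-gon with the nearest-neighbor ring graph (neighbors `j ± 1 mod n`)
balances inverse-square repulsion from the origin against distance-weighted attraction
to ring neighbors: `β₁ x_j/‖x_j‖³ + β₂ Σ_{k∈N_j} ‖x_j−x_k‖(x_k−x_j) = 0`. -/
theorem ngon_ring_equilibrium (n : ℕ) (hn : 3 ≤ n)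
    (β₁ β₂ : ℝ) (hβ₁ : 0 < β₁) (hβ₂ : 0 < β₂)
    (r : ℝ) (hr : r = (β₁ / (4 * β₂ * sin (π / n) * (1 - cos (2 * π / n)))) ^ ((1 : ℝ) / 4)) :
    ∀ j : ℕ, j < n →
      β₁ • ((‖vtx n r j‖ ^ 3)⁻¹ • vtx n r j) +
        β₂ • (‖vtx n r j - vtx n r (j + 1)‖ • (vtx n r (j + 1) - vtx n r j) +
              ‖vtx n r j - vtx n r (j + n - 1)‖ • (vtx n r (j + n - 1) - vtx n r j)) = 0 := by
  intro j hj
  have hn0 : 0 < (n:ℝ) := by positivity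
  have hn0' : (n:ℝ) ≠ 0 := ne_of_gt hn0
  have hππ : π / n < π := by
    apply div_lt_self pi_pos
    exact_mod_cast by omega
  have hsin : 0 < sin (π / n) := sin_pos_of_pos_of_lt_pi (by positivity) hππ
  have hid : 1 - cos (2 * π / n) = 2 * sin (π / n) ^ 2 := by
    have : (2 : ℝ) * π / n = 2 * (π / n) := by ring
    rw [this, Real.cos_two_mul']
    linear_combination - sin_sq_add_cos_sq (π / (n:ℝ))
  have hcos : 0 < 1 - cos (2 * π / n) := by rw [hid]; positivity
  have hbase : 0 < β₁ / (4 * β₂ * sin (π / n) * (1 - cos (2 * π / n))) := by positivity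
  have hrpos : 0 < r := hr ▸ Real.rpow_pos_of_pos hbase _
  have hβ : β₁ = 4 * β₂ * sin (π / n) * (1 - cos (2 * π / n)) * r ^ 4 := by
    have h4 : r ^ (4:ℕ) = β₁ / (4 * β₂ * sin (π / n) * (1 - cos (2 * π / n))) := by
      rw [hr, ← Real.rpow_natCast _ 4, ← Real.rpow_mul hbase.le]
      norm_num
    have hD : (4 * β₂ * sin (π / n) * (1 - cos (2 * π / n))) ≠ 0 := by positivity
    rw [eq_div_iff hD] at h4
    linear_combination -h4
  -- norm of a vertex
  have hnv : ∀ A : ℝ, ‖pt (r * cos A) (r * sin A)‖ = r := by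
    intro A
    rw [norm_pt]
    rw [show (r * cos A)^2 + (r * sin A)^2 = r^2 by
      have := sin_sq_add_cos_sq A; nlinarith]
    exact Real.sqrt_sq hrpos.le
  -- norm of a difference
  have hdiff : ∀ A B : ℝ, ‖pt (r * cos A) (r * sin A) - pt (r * cos B) (r * sin B)‖
      = r * Real.sqrt (2 - 2 * cos (A - B)) := by
    intro A B
    rw [pt_sub, norm_pt]
    rw [show (r * cos A - r * cos B)^2 + (r * sin A - r * sin B)^2
        = r^2 * (2 - 2 * cos (A - B)) by
      rw [Real.cos_sub]
      have h1 := sin_sq_add_cos_sq A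
      have h2 := sin_sq_add_cos_sq B
      nlinarith]
    rw [Real.sqrt_mul (sq_nonneg r), Real.sqrt_sq hrpos.le]
  have hsq : Real.sqrt (2 - 2 * cos (2 * π / n)) = 2 * sin (π / n) := by
    rw [show 2 - 2 * cos (2 * π / n) = (2 * sin (π / n))^2 by linear_combination 2 * hid]
    exact Real.sqrt_sq (by positivity)
  set θ : ℝ := 2 * π * j / n with hθ
  set δ : ℝ := 2 * π / n with hδ
  have hv0 : vtx n r j = pt (r * cos θ) (r * sin θ) := rfl
  have hv1 : vtx n r (j + 1) = pt (r * cos (θ + δ)) (r * sin (θ + δ)) := by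
    have : 2 * π * ((j : ℝ) + 1) / n = θ + δ := by rw [hθ, hδ]; field_simp
    simp only [vtx, Nat.cast_add, Nat.cast_one, this]
  have hv2 : vtx n r (j + n - 1) = pt (r * cos (θ - δ)) (r * sin (θ - δ)) := by
    have hc : ((j + n - 1 : ℕ) : ℝ) = (j : ℝ) + n - 1 := by
      have : 1 ≤ j + n := by omega
      push_cast [this]
      ring
    have hang : 2 * π * ((j : ℝ) + n - 1) / n = (θ - δ) + 2 * π := by
      rw [hθ, hδ]; field_simp; ring
    simp only [vtx, hc, hang, Real.cos_add_two_pi, Real.sin_add_two_pi]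
  rw [hv0, hv1, hv2, hnv, hdiff, hdiff,
    show θ - (θ + δ) = -δ by ring, show θ - (θ - δ) = δ by ring, Real.cos_neg, hsq,
    pt_sub, pt_sub]
  have hr0 : r ≠ 0 := ne_of_gt hrpos
  ext i
  fin_cases i <;>
  · simp only [PiLp.add_apply, PiLp.smul_apply, smul_eq_mul, PiLp.zero_apply, pt,
      WithLp.equiv_symm_apply, WithLp.ofLp_toLp, Fin.zero_eta, Fin.mk_one, Matrix.cons_val_zero, Matrix.cons_val_one, Matrix.head_cons]
    rw [hβ, hδ]; simp only [Real.cos_add, Real.cos_sub, Real.sin_add, Real.sin_sub]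
    field_simp
    ring
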